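/- arXiv:math-ph/0310022 — 2 statements merged into one kernel-verified Lean document; each statement's English description precedes it below -/
import Mathlib

section
/- The Souriau map ℓ = u·ℓ_p ↦ u·uᵀ is well-defined: if u, u' ∈ U(n,ℂ) satisfy u·ℓ_p = u'·ℓ_p as subspaces of ℝ^{2n}, then u·uᵀ = u'·u'ᵀ. -/
open Matrix Complex

noncomputable section

/-- Phase space ℝ^{2n} = ℝ^n_x × ℝ^n_p. -/
abbrev V (n : ℕ) := (Fin n → ℝ) × (Fin n → ℝ)

/-- Standard symplectic form σ(z,z') = p·x' - p'·x. -/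
def Omega (n : ℕ) (z w : V n) : ℝ := z.2 ⬝ᵥ w.1 - w.2 ⬝ᵥ z.1

/-- Lagrangian plane: n-dimensional subspace on which σ vanishes. -/
def IsLagrangian (n : ℕ) (L : Submodule ℝ (V n)) : Prop :=
  Module.finrank ℝ L = n ∧ ∀ z ∈ L, ∀ w ∈ L, Omega n z w = 0

/-- Symplectic linear map. -/
def IsSymplectic (n : ℕ) (S : V n →ₗ[ℝ] V n) : Prop :=
  Function.Bijective S ∧ ∀ z w, Omega n (S z) (S w) = Omega n z w

/-- Dimension of a maximal subspace on which Q is positive. -/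
def posIndex {E : Type*} [AddCommGroup E] [Module ℝ E] (Q : E → ℝ) : ℕ :=
  sSup {k | ∃ W : Submodule ℝ E, Module.finrank ℝ W = k ∧ ∀ v ∈ W, v ≠ 0 → 0 < Q v}

def negIndex {E : Type*} [AddCommGroup E] [Module ℝ E] (Q : E → ℝ) : ℕ :=
  posIndex fun v => -Q v

/-- σ(z,z') + σ(z',z'') + σ(z'',z) on ℓ × ℓ' × ℓ''. -/
def tripleForm (n : ℕ) (L L' L'' : Submodule ℝ (V n)) : (L × L' × L'') → ℝ :=
  fun t => Omega n t.1 t.2.1 + Omega n t.2.1 t.2.2 + Omega n t.2.2 t.1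

/-- Kashiwara signature τ(ℓ,ℓ',ℓ''). -/
def tau (n : ℕ) (L L' L'' : Submodule ℝ (V n)) : ℤ :=
  (posIndex (tripleForm n L L' L'') : ℤ) - negIndex (tripleForm n L L' L'')

/-- ∂dim(ℓ,ℓ',ℓ''). -/
def ddim (n : ℕ) (L L' L'' : Submodule ℝ (V n)) : ℤ :=
  (Module.finrank ℝ ↥(L ⊓ L') : ℤ) - Module.finrank ℝ ↥(L ⊓ L'')
    + Module.finrank ℝ ↥(L' ⊓ L'')

/-- Index of inertia. -/
def Inert (n : ℕ) (L L' L'' : Submodule ℝ (V n)) : ℤ :=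
  (tau n L L' L'' - ddim n L L' L'' + n) / 2

/-- Real and imaginary parts of a complex matrix. -/
def reM (n : ℕ) (u : Matrix (Fin n) (Fin n) ℂ) : Matrix (Fin n) (Fin n) ℝ :=
  of fun i j => (u i j).re

def imM (n : ℕ) (u : Matrix (Fin n) (Fin n) ℂ) : Matrix (Fin n) (Fin n) ℝ :=
  of fun i j => (u i j).im

/-- The identification A+iB ↦ [[A,-B],[B,A]] acting on ℝ^{2n}. -/
def uReal (n : ℕ) (u : Matrix (Fin n) (Fin n) ℂ) : V n →ₗ[ℝ] V n where
  toFun z := (reM n u *ᵥ z.1 - imM n u *ᵥ z.2, imM n u *ᵥ z.1 + reM n u *ᵥ z.2)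
  map_add' a b := by
    ext i <;> (simp [Matrix.mulVec_add]; try ring)
  map_smul' c a := by
    ext i <;> (simp [Matrix.mulVec_smul]; try ring)

/-- The momentum plane ℓ_p = 0 × ℝ^n. -/
def ellP (n : ℕ) : Submodule ℝ (V n) := Submodule.prod ⊥ ⊤

/-! Identify `ℝ²ⁿ` with `ℂⁿ` by `(x, p) ↦ x + i p`; then `uReal n u` is multiplication by `u`
and `ℓ_p` becomes `i ℝⁿ`. If `u ℓ_p = u' ℓ_p`, the unitary `w = u'⁻¹ u` maps `i ℝⁿ` into itself,
hence is a real orthogonal matrix, and `u uᵀ = u' w wᵀ u'ᵀ = u' u'ᵀ`. -/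

def toComplexVec (n : ℕ) (z : V n) : Fin n → ℂ := fun k => ⟨z.1 k, z.2 k⟩

lemma toComplexVec_uReal (n : ℕ) (u : Matrix (Fin n) (Fin n) ℂ) (z : V n) :
    toComplexVec n (uReal n u z) = u *ᵥ toComplexVec n z := by
  funext i
  apply Complex.ext <;>
    simp only [toComplexVec, uReal, LinearMap.coe_mk, AddHom.coe_mk, mulVec, dotProduct, reM,
      imM, of_apply, Pi.sub_apply, Pi.add_apply, re_sum, im_sum, mul_re, mul_im,
      ← Finset.sum_sub_distrib, ← Finset.sum_add_distrib]
  exact Finset.sum_congr rfl fun k _ => add_comm _ _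

lemma toComplexVec_zero_prod (n : ℕ) (p : Fin n → ℝ) :
    toComplexVec n (0, p) = I • fun k => (p k : ℂ) := by
  funext k
  apply Complex.ext <;> simp [toComplexVec]

lemma mem_ellP_iff {n : ℕ} {z : V n} : z ∈ ellP n ↔ z.1 = 0 := by
  simp [ellP, Submodule.mem_prod]

lemma mulVec_ofReal_of_map_ellP_le {n : ℕ} {u u' : Matrix (Fin n) (Fin n) ℂ}
    (hu' : u' ∈ unitaryGroup (Fin n) ℂ)
    (h : (ellP n).map (uReal n u) ≤ (ellP n).map (uReal n u')) (p : Fin n → ℝ) :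
    ∃ q : Fin n → ℝ, (star u' * u) *ᵥ (fun k => (p k : ℂ)) = fun k => (q k : ℂ) := by
  have hp : ((0, p) : V n) ∈ ellP n := mem_ellP_iff.mpr rfl
  obtain ⟨z, hz, hzu⟩ := h (Submodule.mem_map_of_mem hp)
  have hz : z = (0, z.2) := Prod.ext (mem_ellP_iff.mp hz) rfl
  refine ⟨z.2, ?_⟩
  have hcomplex := congrArg (toComplexVec n) hzu
  rw [toComplexVec_uReal, toComplexVec_uReal, hz, toComplexVec_zero_prod, toComplexVec_zero_prod,
    mulVec_smul, mulVec_smul] at hcomplex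
  rw [← mulVec_mulVec, ← smul_right_injective _ I_ne_zero hcomplex, mulVec_mulVec,
    mem_unitaryGroup_iff'.mp hu', one_mulVec]

lemma im_eq_zero_of_mulVec_ofReal {m n : Type*} [Fintype n] [DecidableEq n]
    {M : Matrix m n ℂ}
    (hM : ∀ p : n → ℝ, ∃ q : m → ℝ, M *ᵥ (fun k => (p k : ℂ)) = fun k => (q k : ℂ))
    (i : m) (j : n) : (M i j).im = 0 := by
  obtain ⟨q, hq⟩ := hM (Pi.single j 1)
  have hcol : M i j = q i := by
    simpa [mulVec, dotProduct, Pi.single_apply, apply_ite, mul_ite] using congrFun hq i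
  simp [hcol]

lemma conjTranspose_eq_transpose_of_im_eq_zero {m n : Type*} {M : Matrix m n ℂ}
    (hM : ∀ i j, (M i j).im = 0) : Mᴴ = Mᵀ := by
  ext i j
  exact Complex.conj_eq_iff_im.mpr (hM j i)

/-- The Souriau map is well-defined: u·ℓ_p = u'·ℓ_p implies u·uᵀ = u'·u'ᵀ. -/
theorem souriau_well_defined (n : ℕ) (u u' : Matrix (Fin n) (Fin n) ℂ)
    (hu : u ∈ Matrix.unitaryGroup (Fin n) ℂ) (hu' : u' ∈ Matrix.unitaryGroup (Fin n) ℂ)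
    (h : (ellP n).map (uReal n u) = (ellP n).map (uReal n u')) :
    u * uᵀ = u' * u'ᵀ := by
  set w := star u' * u
  have hw_real : wᴴ = wᵀ := conjTranspose_eq_transpose_of_im_eq_zero
    (im_eq_zero_of_mulVec_ofReal (mulVec_ofReal_of_map_ellP_le hu' h.le))
  have hw_orth : w * wᵀ = 1 := by
    rw [← hw_real]
    exact mem_unitaryGroup_iff.mp (mul_mem (Unitary.star_mem hu') hu)
  have hu_eq : u = u' * w := by
    rw [← mul_assoc, mem_unitaryGroup_iff.mp hu', one_mul]
  calc u * uᵀ = u' * (w * wᵀ) * u'ᵀ := by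
        rw [hu_eq, transpose_mul]; simp only [mul_assoc]
    _ = u' * u'ᵀ := by rw [hw_orth, mul_one]
end
end

section
/- The index of inertia Inert(ℓ,ℓ',ℓ'') = (τ(ℓ,ℓ',ℓ'') - ∂dim(ℓ,ℓ',ℓ'') + n)/2 is an integer for all triples of Lagrangian planes, where ∂dim(ℓ,ℓ',ℓ'') = dim(ℓ∩ℓ') - dim(ℓ∩ℓ'') + dim(ℓ'∩ℓ''). -/
open Matrix Complex

noncomputable section

/-!
The Kashiwara form `tripleForm` is a quadratic form on `ℓ × ℓ' × ℓ''`, a space of dimension `3n`.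
Diagonalising it in an orthogonal basis shows that its positive index `p`, its negative index `q`
and the dimension `r` of its radical satisfy `p + q + r = 3n`. Because the three planes are
Lagrangian, the radical consists exactly of the triples `(a + c, a + b, b + c)` with
`a ∈ ℓ ∩ ℓ'`, `b ∈ ℓ' ∩ ℓ''`, `c ∈ ℓ'' ∩ ℓ`, so `r = dim(ℓ∩ℓ') + dim(ℓ'∩ℓ'') + dim(ℓ''∩ℓ)`.
Hence `τ - ∂dim + n = (p - q) - ∂dim + n ≡ p + q + r + n = 4n` modulo `2`.
-/

open Module Submodule Finset QuadraticMap

namespace Module.Basis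

lemma finrank_span_image {ι E : Type*} [AddCommGroup E] [Module ℝ E] (v : Basis ι ℝ E)
    (S : Finset ι) : finrank ℝ (span ℝ (v '' S)) = #S := by
  rw [Set.image_eq_range]
  exact (finrank_span_eq_card (v.linearIndependent.comp _ Subtype.val_injective)).trans
    (Fintype.card_coe S)

lemma repr_eq_zero_of_mem_span_image {ι E : Type*} [AddCommGroup E] [Module ℝ E]
    (v : Basis ι ℝ E) {S : Set ι} {m : E} (hm : m ∈ span ℝ (v '' S)) {i : ι} (hi : i ∉ S) :
    v.repr m i = 0 :=
  Finsupp.notMem_support_iff.1 fun h => hi (v.mem_span_image.1 hm h)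

end Module.Basis

lemma Finset.card_pos_add_card_neg_add_card_zero {ι : Type*} [Fintype ι] (d : ι → ℝ) :
    #{i | 0 < d i} + #{i | d i < 0} + #{i | d i = 0} = Fintype.card ι := by
  rw [card_filter, card_filter, card_filter, ← sum_add_distrib, ← sum_add_distrib, ← card_univ,
    card_eq_sum_ones]
  refine sum_congr rfl fun i _ => ?_
  rcases lt_trichotomy (d i) 0 with h | h | h
  · simp [h, h.ne, h.not_gt]
  · simp [h]
  · simp [h, h.ne', h.not_gt]

namespace QuadraticForm

variable {E : Type*} [AddCommGroup E] [Module ℝ E] (Q : QuadraticForm ℝ E)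

section OrthogonalBasis

variable {ι : Type*} [Fintype ι] {v : Basis ι ℝ E} (hv : (associated Q).IsOrthoᵢ v)
include hv

lemma apply_eq_sum_of_isOrthoᵢ (m : E) : Q m = ∑ i, Q (v i) * (v.repr m i * v.repr m i) := by
  have := congrArg (· (v.repr m)) (basisRepr_eq_of_iIsOrtho Q v hv)
  simpa [basisRepr_apply, weightedSumSquares_apply, v.sum_repr] using this

lemma associated_apply_basis_of_isOrthoᵢ (m : E) (j : ι) :
    associated Q m (v j) = v.repr m j * Q (v j) := by
  conv_lhs => rw [← v.sum_repr m]
  rw [map_sum, LinearMap.sum_apply, sum_eq_single j]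
  · simp [associated_eq_self_apply]
  · intro i _ hij
    simp [hv hij]
  · simp

lemma ker_associated_eq_span :
    LinearMap.ker (associated Q) = span ℝ (v '' ↑({j | Q (v j) = 0} : Finset ι)) := by
  ext m
  rw [LinearMap.mem_ker, v.mem_span_image]
  have : associated Q m = 0 ↔ ∀ j, v.repr m j * Q (v j) = 0 := by
    simp_rw [← associated_apply_basis_of_isOrthoᵢ Q hv]
    exact ⟨fun h j => by simp [h], fun h => v.ext fun j => by simpa using h j⟩
  simp [this, Set.subset_def, or_iff_not_imp_left]

lemma apply_pos_of_mem_span_pos {m : E} (hm : m ∈ span ℝ (v '' {i | 0 < Q (v i)}))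
    (hm0 : m ≠ 0) : 0 < Q m := by
  obtain ⟨j, hj⟩ : ∃ j, v.repr m j ≠ 0 := by
    by_contra! h
    exact hm0 (v.repr.injective (by ext j; simp [h]))
  have hjpos : 0 < Q (v j) := by
    by_contra hjpos
    exact hj (v.repr_eq_zero_of_mem_span_image hm hjpos)
  rw [apply_eq_sum_of_isOrthoᵢ Q hv]
  refine sum_pos' (fun i _ => ?_) ⟨j, mem_univ j, mul_pos hjpos (mul_self_pos.2 hj)⟩
  by_cases hi : 0 < Q (v i)
  · exact mul_nonneg hi.le (mul_self_nonneg _)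
  · simp [v.repr_eq_zero_of_mem_span_image hm hi]

lemma apply_nonpos_of_mem_span_nonpos {m : E} (hm : m ∈ span ℝ (v '' {i | Q (v i) ≤ 0})) :
    Q m ≤ 0 := by
  rw [apply_eq_sum_of_isOrthoᵢ Q hv]
  refine sum_nonpos fun i _ => ?_
  by_cases hi : Q (v i) ≤ 0
  · exact mul_nonpos_of_nonpos_of_nonneg hi (mul_self_nonneg _)
  · simp [v.repr_eq_zero_of_mem_span_image hm hi]

lemma posIndex_eq_card_of_isOrthoᵢ : posIndex Q = #{i | 0 < Q (v i)} := by
  classical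
  have := v.finiteDimensional_of_finite
  set P : Finset ι := {i | 0 < Q (v i)}
  have hP : (P : Set ι) = {i | 0 < Q (v i)} := by ext; simp [P]
  have hPc : ((Pᶜ : Finset ι) : Set ι) = {i | Q (v i) ≤ 0} := by ext; simp [P]
  refine IsGreatest.csSup_eq ⟨⟨span ℝ (v '' P), v.finrank_span_image P, fun m hm hm0 => ?_⟩, ?_⟩
  · exact apply_pos_of_mem_span_pos Q hv (hP ▸ hm) hm0
  rintro k ⟨W, rfl, hW⟩
  have hdisj : Disjoint W (span ℝ (v '' ↑Pᶜ)) := Submodule.disjoint_def.2 fun m hmW hmC => by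
    by_contra hm0
    exact (hW m hmW hm0).not_ge (apply_nonpos_of_mem_span_nonpos Q hv (hPc ▸ hmC))
  have := finrank_add_finrank_le_of_disjoint hdisj
  rw [v.finrank_span_image, finrank_eq_card_basis v, card_compl] at this
  have := P.card_le_univ
  change finrank ℝ W ≤ #P
  omega

end OrthogonalBasis

theorem posIndex_add_negIndex_add_finrank_ker [FiniteDimensional ℝ E] :
    posIndex Q + negIndex Q + finrank ℝ (LinearMap.ker (associated Q)) = finrank ℝ E := by
  obtain ⟨v, hv⟩ := LinearMap.BilinForm.exists_orthogonal_basis (associated_isSymm ℝ Q)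
  have hv_neg : (associated (-Q)).IsOrthoᵢ v := fun i j hij => by
    simpa using congrArg Neg.neg (hv hij)
  rw [negIndex, show (fun m => -Q m) = ⇑(-Q) from rfl, posIndex_eq_card_of_isOrthoᵢ Q hv,
    posIndex_eq_card_of_isOrthoᵢ (-Q) hv_neg, ker_associated_eq_span Q hv, v.finrank_span_image]
  simpa using card_pos_add_card_neg_add_card_zero fun i => Q (v i)

end QuadraticForm

section Symplectic

variable {n : ℕ}

def omegaForm (n : ℕ) : LinearMap.BilinForm ℝ (V n) :=
  LinearMap.mk₂ ℝ (Omega n)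
    (fun _ _ _ => by
      simp only [Omega, Prod.fst_add, Prod.snd_add, add_dotProduct, dotProduct_add]; ring)
    (fun _ _ _ => by
      simp only [Omega, Prod.smul_fst, Prod.smul_snd, smul_dotProduct, dotProduct_smul,
        smul_eq_mul]; ring)
    (fun _ _ _ => by
      simp only [Omega, Prod.fst_add, Prod.snd_add, add_dotProduct, dotProduct_add]; ring)
    (fun _ _ _ => by
      simp only [Omega, Prod.smul_fst, Prod.smul_snd, smul_dotProduct, dotProduct_smul,
        smul_eq_mul]; ring)

@[simp] lemma omegaForm_apply (z w : V n) : omegaForm n z w = Omega n z w := rfl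

lemma omegaForm_nondegenerate : (omegaForm n).Nondegenerate := by
  refine LinearMap.BilinForm.Nondegenerate.ofSeparatingLeft fun z hz => ?_
  ext i
  · simpa [Omega, single_dotProduct] using hz (0, Pi.single i 1)
  · simpa [Omega, dotProduct_single] using hz (Pi.single i 1, 0)

lemma IsLagrangian.orthogonal_eq {L : Submodule ℝ (V n)} (hL : IsLagrangian n L) :
    (omegaForm n).orthogonal L = L := by
  have hle : L ≤ (omegaForm n).orthogonal L := fun z hz w hw => hL.2 w hw z hz
  refine (eq_of_le_of_finrank_le hle ?_).symm
  rw [LinearMap.BilinForm.finrank_orthogonal omegaForm_nondegenerate, hL.1]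
  simp only [V, finrank_prod, finrank_fin_fun]
  omega

lemma IsLagrangian.mem_iff {L : Submodule ℝ (V n)} (hL : IsLagrangian n L) {z : V n} :
    z ∈ L ↔ ∀ w ∈ L, Omega n w z = 0 := by
  conv_lhs => rw [← hL.orthogonal_eq]
  rfl

variable (L L' L'' : Submodule ℝ (V n))

def kashiwaraForm : QuadraticForm ℝ (L × L' × L'') :=
  let π₁ := L.subtype ∘ₗ LinearMap.fst ℝ L (L' × L'')
  let π₂ := L'.subtype ∘ₗ LinearMap.fst ℝ L' L'' ∘ₗ LinearMap.snd ℝ L (L' × L'')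
  let π₃ := L''.subtype ∘ₗ LinearMap.snd ℝ L' L'' ∘ₗ LinearMap.snd ℝ L (L' × L'')
  LinearMap.BilinMap.toQuadraticMap
    ((omegaForm n).compl₁₂ π₁ π₂ + (omegaForm n).compl₁₂ π₂ π₃ + (omegaForm n).compl₁₂ π₃ π₁)

lemma coe_kashiwaraForm : ⇑(kashiwaraForm L L' L'') = tripleForm n L L' L'' := rfl

lemma associated_kashiwaraForm_apply (t s : L × L' × L'') :
    associated (kashiwaraForm L L' L'') t s =
      (Omega n s.1 (t.2.1 - t.2.2) + Omega n s.2.1 (t.2.2 - t.1)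
        + Omega n s.2.2 (t.1 - t.2.1)) / 2 := by
  rw [kashiwaraForm, associated_toQuadraticMap]
  simp [Omega, dotProduct_sub, sub_dotProduct, half_moduleEnd_apply_eq_half_smul]
  ring

variable {L L' L'' : Submodule ℝ (V n)}

lemma mem_ker_associated_kashiwaraForm (hL : IsLagrangian n L) (hL' : IsLagrangian n L')
    (hL'' : IsLagrangian n L'') (t : L × L' × L'') :
    t ∈ LinearMap.ker (associated (kashiwaraForm L L' L'')) ↔
      (t.2.1 - t.2.2 : V n) ∈ L ∧ (t.2.2 - t.1 : V n) ∈ L' ∧ (t.1 - t.2.1 : V n) ∈ L'' := by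
  simp only [LinearMap.mem_ker, LinearMap.ext_iff, associated_kashiwaraForm_apply,
    LinearMap.zero_apply]
  rw [hL.mem_iff, hL'.mem_iff, hL''.mem_iff]
  constructor
  · intro h
    refine ⟨fun w hw => ?_, fun w hw => ?_, fun w hw => ?_⟩
    · simpa [Omega] using h (⟨w, hw⟩, 0, 0)
    · simpa [Omega] using h (0, ⟨w, hw⟩, 0)
    · simpa [Omega] using h (0, 0, ⟨w, hw⟩)
  · rintro ⟨h₁, h₂, h₃⟩ s
    simp [h₁ _ s.1.2, h₂ _ s.2.1.2, h₃ _ s.2.2.2]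

variable (L L' L'') in
def kashiwaraRadicalParam : (↥(L ⊓ L') × ↥(L' ⊓ L'') × ↥(L'' ⊓ L)) →ₗ[ℝ] (L × L' × L'') where
  toFun x :=
    (⟨x.1 + x.2.2, add_mem (mem_inf.1 x.1.2).1 (mem_inf.1 x.2.2.2).2⟩,
     ⟨x.1 + x.2.1, add_mem (mem_inf.1 x.1.2).2 (mem_inf.1 x.2.1.2).1⟩,
     ⟨x.2.1 + x.2.2, add_mem (mem_inf.1 x.2.1.2).2 (mem_inf.1 x.2.2.2).1⟩)
  map_add' x y := by ext <;> simp <;> abel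
  map_smul' c x := by ext <;> simp

lemma kashiwaraRadicalParam_injective : Function.Injective (kashiwaraRadicalParam L L' L'') := by
  have key (x y z : V n) (h₁ : x + z = 0) (h₂ : x + y = 0) (h₃ : y + z = 0) : x = 0 := by
    have : x = (2⁻¹ : ℝ) • ((x + z) + (x + y) - (y + z)) := by module
    rw [this, h₁, h₂, h₃]
    simp
  refine (injective_iff_map_eq_zero _).2 fun ⟨a, b, c⟩ h => ?_
  simp only [kashiwaraRadicalParam, LinearMap.coe_mk, AddHom.coe_mk, Prod.mk_eq_zero,
    Subtype.ext_iff, ZeroMemClass.coe_zero] at h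
  obtain ⟨hac, hab, hbc⟩ := h
  simp only [Prod.mk_eq_zero, Subtype.ext_iff, ZeroMemClass.coe_zero]
  exact ⟨key _ _ _ hac hab hbc, key _ _ _ hbc (by rwa [add_comm]) hac,
    key _ _ _ (by rwa [add_comm]) (by rwa [add_comm]) hab⟩

lemma range_kashiwaraRadicalParam (hL : IsLagrangian n L) (hL' : IsLagrangian n L')
    (hL'' : IsLagrangian n L'') :
    LinearMap.range (kashiwaraRadicalParam L L' L'') =
      LinearMap.ker (associated (kashiwaraForm L L' L'')) := by
  ext t
  rw [mem_ker_associated_kashiwaraForm hL hL' hL'']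
  constructor
  · rintro ⟨⟨a, b, c⟩, rfl⟩
    simp only [kashiwaraRadicalParam, LinearMap.coe_mk, AddHom.coe_mk]
    refine ⟨?_, ?_, ?_⟩
    · convert L.sub_mem (mem_inf.1 a.2).1 (mem_inf.1 c.2).2 using 1; abel
    · convert L'.sub_mem (mem_inf.1 b.2).1 (mem_inf.1 a.2).2 using 1; abel
    · convert L''.sub_mem (mem_inf.1 c.2).1 (mem_inf.1 b.2).2 using 1; abel
  · rintro ⟨h₁, h₂, h₃⟩
    obtain ⟨⟨t₁, ht₁⟩, ⟨t₂, ht₂⟩, ⟨t₃, ht₃⟩⟩ := t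
    dsimp only at h₁ h₂ h₃
    have ha : (2⁻¹ : ℝ) • (t₁ + t₂ - t₃) ∈ L ⊓ L' := mem_inf.2
      ⟨by convert L.smul_mem 2⁻¹ (L.add_mem ht₁ h₁) using 2; abel,
       by convert L'.smul_mem 2⁻¹ (L'.sub_mem ht₂ h₂) using 2; abel⟩
    have hb : (2⁻¹ : ℝ) • (t₂ + t₃ - t₁) ∈ L' ⊓ L'' := mem_inf.2
      ⟨by convert L'.smul_mem 2⁻¹ (L'.add_mem ht₂ h₂) using 2; abel,
       by convert L''.smul_mem 2⁻¹ (L''.sub_mem ht₃ h₃) using 2; abel⟩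
    have hc : (2⁻¹ : ℝ) • (t₃ + t₁ - t₂) ∈ L'' ⊓ L := mem_inf.2
      ⟨by convert L''.smul_mem 2⁻¹ (L''.add_mem ht₃ h₃) using 2; abel,
       by convert L.smul_mem 2⁻¹ (L.sub_mem ht₁ h₁) using 2; abel⟩
    refine ⟨(⟨_, ha⟩, ⟨_, hb⟩, ⟨_, hc⟩), ?_⟩
    refine Prod.ext (Subtype.ext ?_) (Prod.ext (Subtype.ext ?_) (Subtype.ext ?_)) <;>
      simp only [kashiwaraRadicalParam, LinearMap.coe_mk, AddHom.coe_mk] <;> module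

lemma finrank_ker_associated_kashiwaraForm (hL : IsLagrangian n L) (hL' : IsLagrangian n L')
    (hL'' : IsLagrangian n L'') :
    finrank ℝ (LinearMap.ker (associated (kashiwaraForm L L' L''))) =
      finrank ℝ ↥(L ⊓ L') + finrank ℝ ↥(L' ⊓ L'') + finrank ℝ ↥(L'' ⊓ L) := by
  rw [← range_kashiwaraRadicalParam hL hL' hL'',
    LinearMap.finrank_range_of_inj kashiwaraRadicalParam_injective, finrank_prod, finrank_prod,
    add_assoc]

end Symplectic

/-- the index of inertia (τ - ∂dim + n)/2 is an integer. -/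
theorem inert_is_integer (n : ℕ) (L L' L'' : Submodule ℝ (V n))
    (hL : IsLagrangian n L) (hL' : IsLagrangian n L') (hL'' : IsLagrangian n L'') :
    ∃ k : ℤ, tau n L L' L'' - ddim n L L' L'' + n = 2 * k := by
  have hsylvester := QuadraticForm.posIndex_add_negIndex_add_finrank_ker (kashiwaraForm L L' L'')
  rw [coe_kashiwaraForm, finrank_ker_associated_kashiwaraForm hL hL' hL'', finrank_prod,
    finrank_prod, hL.1, hL'.1, hL''.1, inf_comm L''] at hsylvester
  refine ⟨2 * n - finrank ℝ ↥(L ⊓ L') - finrank ℝ ↥(L' ⊓ L'') - negIndex (tripleForm n L L' L''),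
    ?_⟩
  rw [tau, ddim]
  omega
end
end
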